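/- arXiv:2108.05042 — 4 statements merged into one kernel-verified Lean document; each statement's English description precedes it below -/
import Mathlib

section
/- For any T, λ > 0, θ ∈ [0,1], and γ > 0, there is a constant C = C(T,γ,θ,λ) such that for all 0 ≤ s < t ≤ T and ζ = (ξ,η) ∈ R^{2d}: ∫_s^t r^{γ−1} e^{−λ(r³|ξ|² + r|η|²)} dr ≤ C |t−s|^{(γ∧1)(1−θ)} (1 + |ζ|_a)^{−2θγ}, where |ζ|_a = |ξ|^{1/3} + |η|. -/
open MeasureTheory

/-!
The integrand is at most `r^{γ-1}`, whose integral over `(s, t] ⊆ [0, T]` is `≲ (t-s)^{γ∧1}`.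
Dropping one of the two terms in the exponent and extending the integral to `(0, ∞)` gives the
Gamma integrals `∫₀^∞ r^{γ-1} e^{-λ|ξ|² r³} dr = Γ(γ/3)/3 · (λ|ξ|²)^{-γ/3}` and
`∫₀^∞ r^{γ-1} e^{-λ|η|² r} dr = Γ(γ) · (λ|η|²)^{-γ}`; together with the bound by a constant these
give decay `(1 + |ξ|^{1/3} + |η|)^{-2γ}`. The claim is the geometric interpolation
`I = I^{1-θ} I^θ` of the two bounds.
-/

open Set Real

lemma setIntegral_le_setIntegral_of_subset {α : Type*} [MeasurableSpace α] {μ : Measure α}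
    {f g : α → ℝ} {U V : Set α} (hU : MeasurableSet U) (hV : MeasurableSet V) (hUV : U ⊆ V)
    (hg : IntegrableOn g V μ) (hf0 : ∀ x ∈ U, 0 ≤ f x) (hfg : ∀ x ∈ U, f x ≤ g x)
    (hg0 : ∀ x ∈ V, 0 ≤ g x) :
    ∫ x in U, f x ∂μ ≤ ∫ x in V, g x ∂μ :=
  (integral_mono_of_nonneg (ae_restrict_of_forall_mem hU hf0) (hg.mono_set hUV)
      (ae_restrict_of_forall_mem hU hfg)).trans
    (setIntegral_mono_set hg (ae_restrict_of_forall_mem hV hg0) hUV.eventuallyLE)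

lemma le_rpow_mul_rpow_of_le_of_le {I A B θ : ℝ} (hI : 0 ≤ I) (hA : I ≤ A) (hB : I ≤ B)
    (hθ0 : 0 ≤ θ) (hθ1 : θ ≤ 1) :
    I ≤ A ^ (1 - θ) * B ^ θ :=
  calc I = I ^ (1 - θ) * I ^ θ := by rw [← rpow_add' hI (by norm_num), sub_add_cancel, rpow_one]
    _ ≤ A ^ (1 - θ) * B ^ θ :=
      mul_le_mul (rpow_le_rpow hI hA (by linarith)) (rpow_le_rpow hI hB hθ0) (rpow_nonneg hI θ)
        (rpow_nonneg (hI.trans hA) _)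

section TimeIntegral

variable {γ s t : ℝ}

lemma integrableOn_Ioc_rpow_sub_one (hγ : 0 < γ) :
    IntegrableOn (fun r : ℝ => r ^ (γ - 1)) (Ioc s t) :=
  (intervalIntegral.intervalIntegrable_rpow' (by linarith)).1

lemma integral_Ioc_rpow_sub_one_le_of_le_one (hγ : 0 < γ) (hγ1 : γ ≤ 1) (hs : 0 ≤ s)
    (hst : s ≤ t) :
    ∫ r in Ioc s t, r ^ (γ - 1) ≤ (t - s) ^ γ / γ := by
  rw [← intervalIntegral.integral_of_le hst, integral_rpow (Or.inl (by linarith)), sub_add_cancel]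
  have hsub := rpow_add_le_add_rpow hs (sub_nonneg.2 hst) hγ.le hγ1
  rw [add_sub_cancel] at hsub
  gcongr
  linarith

lemma integral_Ioc_rpow_sub_one_le_of_one_le {T : ℝ} (hγ1 : 1 ≤ γ) (hs : 0 ≤ s) (hst : s ≤ t)
    (htT : t ≤ T) :
    ∫ r in Ioc s t, r ^ (γ - 1) ≤ T ^ (γ - 1) * (t - s) :=
  calc ∫ r in Ioc s t, r ^ (γ - 1) ≤ ∫ _ in Ioc s t, T ^ (γ - 1) :=
        setIntegral_mono_on (integrableOn_Ioc_rpow_sub_one (by linarith))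
          (integrableOn_const measure_Ioc_lt_top.ne) measurableSet_Ioc fun r hr =>
            rpow_le_rpow (hs.trans hr.1.le) (hr.2.trans htT) (by linarith)
    _ = T ^ (γ - 1) * (t - s) := by
        rw [setIntegral_const, smul_eq_mul, volume_real_Ioc_of_le hst, mul_comm]

lemma integral_Ioc_rpow_sub_one_le {T : ℝ} (hγ : 0 < γ) (hs : 0 ≤ s) (hst : s ≤ t)
    (htT : t ≤ T) :
    ∫ r in Ioc s t, r ^ (γ - 1) ≤ (1 / γ + T ^ (γ - 1)) * (t - s) ^ min γ 1 := by
  have hT : 0 ≤ T := hs.trans (hst.trans htT)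
  rcases le_total γ 1 with hγ1 | hγ1
  · rw [min_eq_left hγ1]
    calc ∫ r in Ioc s t, r ^ (γ - 1) ≤ 1 / γ * (t - s) ^ γ := by
          rw [one_div_mul_eq_div]
          exact integral_Ioc_rpow_sub_one_le_of_le_one hγ hγ1 hs hst
      _ ≤ (1 / γ + T ^ (γ - 1)) * (t - s) ^ γ := by
          gcongr
          exact le_add_of_nonneg_right (rpow_nonneg hT _)
  · rw [min_eq_right hγ1, rpow_one]
    calc ∫ r in Ioc s t, r ^ (γ - 1) ≤ T ^ (γ - 1) * (t - s) :=
          integral_Ioc_rpow_sub_one_le_of_one_le hγ1 hs hst htT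
      _ ≤ (1 / γ + T ^ (γ - 1)) * (t - s) := by
          gcongr
          exact le_add_of_nonneg_left (by positivity)

end TimeIntegral

lemma setIntegral_Ioc_mul_rpow_le_Gamma {f : ℝ → ℝ} {s t p b γ : ℝ} (hs : 0 ≤ s) (hp : 0 < p)
    (hb : 0 ≤ b) (hγ : 0 < γ) (hf0 : ∀ r > 0, 0 ≤ f r)
    (hfle : ∀ r > 0, f r ≤ r ^ (γ - 1) * exp (-b * r ^ p)) :
    (∫ r in Ioc s t, f r) * b ^ (γ / p) ≤ Gamma (γ / p) / p := by
  have hΓ : 0 < Gamma (γ / p) / p := div_pos (Gamma_pos_of_pos (by positivity)) hp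
  rcases hb.eq_or_lt with rfl | hb
  · rw [zero_rpow (by positivity), mul_zero]
    exact hΓ.le
  have hUV : Ioc s t ⊆ Ioi 0 := fun r hr => hs.trans_lt hr.1
  have hle := setIntegral_le_setIntegral_of_subset measurableSet_Ioc measurableSet_Ioi hUV
    (integrableOn_rpow_mul_exp_neg_mul_rpow (by linarith) hp hb)
    (fun r hr => hf0 r (hUV hr)) (fun r hr => hfle r (hUV hr))
    (fun r (hr : 0 < r) => by positivity)
  rw [integral_rpow_mul_exp_neg_mul_rpow hp (by linarith) hb, sub_add_cancel] at hle
  calc (∫ r in Ioc s t, f r) * b ^ (γ / p)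
      ≤ b ^ (-γ / p) * (1 / p) * Gamma (γ / p) * b ^ (γ / p) := by gcongr
    _ = Gamma (γ / p) / p := by
        rw [neg_div, rpow_neg hb.le]
        field_simp

lemma le_mul_one_add_add_rpow_neg {I K x y κ : ℝ} (hI : 0 ≤ I) (hx : 0 ≤ x) (hy : 0 ≤ y)
    (hκ : 0 ≤ κ) (h1 : I ≤ K) (hxI : I * x ^ κ ≤ K) (hyI : I * y ^ κ ≤ K) :
    I ≤ 3 ^ κ * K * (1 + (x + y)) ^ (-κ) := by
  obtain ⟨m, hm_def⟩ : ∃ m, m = max 1 (max x y) := ⟨_, rfl⟩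
  have hm : I * m ^ κ ≤ K := by
    rcases max_choice 1 (max x y) with h | h <;> rw [hm_def, h]
    · rwa [one_rpow, mul_one]
    · rcases max_choice x y with h' | h' <;> rwa [h']
  have hN : 0 < 1 + (x + y) := by positivity
  have hNm : 1 + (x + y) ≤ 3 * m := by
    have := le_max_left 1 (max x y)
    have := le_max_right 1 (max x y)
    have := le_max_left x y
    have := le_max_right x y
    linarith [hm_def]
  rw [rpow_neg hN.le, ← div_eq_mul_inv, le_div_iff₀ (rpow_pos_of_pos hN _)]
  calc I * (1 + (x + y)) ^ κ ≤ I * (3 * m) ^ κ := by gcongr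
    _ = 3 ^ κ * (I * m ^ κ) := by rw [mul_rpow (by norm_num) (by linarith)]; ring
    _ ≤ 3 ^ κ * K := by gcongr

section KineticIntegral

variable {s t lam γ a b : ℝ}

lemma setIntegral_kinetic_nonneg (hs : 0 ≤ s) :
    0 ≤ ∫ r in Ioc s t, r ^ (γ - 1) * exp (-lam * (r ^ 3 * a ^ 2 + r * b ^ 2)) :=
  setIntegral_nonneg measurableSet_Ioc fun r hr => by
    have := hs.trans_lt hr.1
    positivity

lemma setIntegral_kinetic_le_setIntegral_rpow (hs : 0 ≤ s) (hlam : 0 ≤ lam) (hγ : 0 < γ) :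
    ∫ r in Ioc s t, r ^ (γ - 1) * exp (-lam * (r ^ 3 * a ^ 2 + r * b ^ 2)) ≤
      ∫ r in Ioc s t, r ^ (γ - 1) :=
  setIntegral_le_setIntegral_of_subset measurableSet_Ioc measurableSet_Ioc subset_rfl
    (integrableOn_Ioc_rpow_sub_one hγ)
    (fun r hr => by
      have := hs.trans_lt hr.1
      positivity)
    (fun r hr => by
      have := hs.trans_lt hr.1
      refine mul_le_of_le_one_right (by positivity) (exp_le_one_iff.2 ?_)
      have : 0 ≤ lam * (r ^ 3 * a ^ 2 + r * b ^ 2) := by positivity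
      linarith)
    (fun r hr => rpow_nonneg (hs.trans hr.1.le) _)

lemma setIntegral_kinetic_le_decay {K : ℝ} (hs : 0 ≤ s) (hlam : 0 < lam) (hγ : 0 < γ)
    (ha : 0 ≤ a) (hb : 0 ≤ b) (hK : ∫ r in Ioc s t, r ^ (γ - 1) ≤ K) :
    ∫ r in Ioc s t, r ^ (γ - 1) * exp (-lam * (r ^ 3 * a ^ 2 + r * b ^ 2)) ≤
      3 ^ (2 * γ) * max K (max (Gamma (γ / 3) / 3 / lam ^ (γ / 3)) (Gamma γ / lam ^ γ)) *
        (1 + (a ^ ((1 : ℝ) / 3) + b)) ^ (-(2 * γ)) := by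
  set I := ∫ r in Ioc s t, r ^ (γ - 1) * exp (-lam * (r ^ 3 * a ^ 2 + r * b ^ 2))
  have hξ : I * (lam * a ^ 2) ^ (γ / 3) ≤ Gamma (γ / 3) / 3 :=
    setIntegral_Ioc_mul_rpow_le_Gamma hs three_pos (by positivity) hγ
      (fun r hr => by positivity)
      (fun r hr => by
        rw [rpow_ofNat]
        gcongr _ * exp ?_
        nlinarith [mul_nonneg (mul_nonneg hlam.le hr.le) (sq_nonneg b)])
  have hη : I * (lam * b ^ 2) ^ (γ / 1) ≤ Gamma (γ / 1) / 1 :=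
    setIntegral_Ioc_mul_rpow_le_Gamma hs one_pos (by positivity) hγ
      (fun r hr => by positivity)
      (fun r hr => by
        rw [rpow_one]
        gcongr _ * exp ?_
        nlinarith [mul_nonneg (mul_nonneg hlam.le (pow_nonneg hr.le 3)) (sq_nonneg a)])
  refine le_mul_one_add_add_rpow_neg (setIntegral_kinetic_nonneg hs) (by positivity) hb
    (by positivity) ?_ ?_ ?_
  · exact ((setIntegral_kinetic_le_setIntegral_rpow hs hlam.le hγ).trans hK).trans
      (le_max_left _ _)
  · refine le_trans ?_ ((le_max_left _ _).trans (le_max_right _ _))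
    have : (a ^ ((1 : ℝ) / 3)) ^ (2 * γ) * lam ^ (γ / 3) = (lam * a ^ 2) ^ (γ / 3) := by
      rw [← rpow_mul ha, mul_rpow hlam.le (sq_nonneg a), ← rpow_natCast, ← rpow_mul ha]
      ring_nf
    rwa [le_div_iff₀ (by positivity), mul_assoc, this]
  · refine le_trans ?_ ((le_max_right _ _).trans (le_max_right _ _))
    have : b ^ (2 * γ) * lam ^ γ = (lam * b ^ 2) ^ γ := by
      rw [mul_rpow hlam.le (sq_nonneg b), ← rpow_natCast, ← rpow_mul hb]
      ring_nf
    rw [le_div_iff₀ (by positivity), mul_assoc, this]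
    simpa only [div_one] using hη

end KineticIntegral

/-- Interpolation bound for the time integral of the kinetic Gaussian factor:
for `T, λ > 0`, `θ ∈ [0,1]`, `γ > 0` there is `C` such that for `0 ≤ s < t ≤ T`,
`∫_s^t r^{γ−1} e^{−λ(r³|ξ|² + r|η|²)} dr ≤ C |t−s|^{(γ∧1)(1−θ)} (1+|ζ|_a)^{−2θγ}`
with `|ζ|_a = |ξ|^{1/3} + |η|`. -/
theorem kinetic_time_integral_bound (d : ℕ) (T lam θ γ : ℝ) (hT : 0 < T)
    (hlam : 0 < lam) (hθ : θ ∈ Set.Icc (0 : ℝ) 1) (hγ : 0 < γ) :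
    ∃ C > 0, ∀ s t : ℝ, 0 ≤ s → s < t → t ≤ T →
      ∀ ξ η : EuclideanSpace ℝ (Fin d),
        (∫ r in Set.Ioc s t,
            r ^ (γ - 1) * Real.exp (-lam * (r ^ 3 * ‖ξ‖ ^ 2 + r * ‖η‖ ^ 2))) ≤
          C * |t - s| ^ (min γ 1 * (1 - θ)) *
            (1 + (‖ξ‖ ^ ((1 : ℝ) / 3) + ‖η‖)) ^ (-(2 * θ * γ)) := by
  set C₁ := 1 / γ + T ^ (γ - 1)
  set C₂ := 3 ^ (2 * γ) *
    max (C₁ * T ^ min γ 1) (max (Gamma (γ / 3) / 3 / lam ^ (γ / 3)) (Gamma γ / lam ^ γ))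
  have hC₂ : 0 < C₂ := by positivity
  refine ⟨C₁ ^ (1 - θ) * C₂ ^ θ, by positivity, fun s t hs hst htT ξ η => ?_⟩
  have hts : 0 < t - s := sub_pos.2 hst
  have htime := integral_Ioc_rpow_sub_one_le hγ hs hst.le htT
  have hsmall :=
    (setIntegral_kinetic_le_setIntegral_rpow (a := ‖ξ‖) (b := ‖η‖) hs hlam.le hγ).trans htime
  have hdecay := setIntegral_kinetic_le_decay (K := C₁ * T ^ min γ 1) hs hlam hγ (norm_nonneg ξ)
    (norm_nonneg η) (htime.trans (by gcongr; linarith))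
  calc _ ≤ (C₁ * (t - s) ^ min γ 1) ^ (1 - θ) *
        (C₂ * (1 + (‖ξ‖ ^ ((1 : ℝ) / 3) + ‖η‖)) ^ (-(2 * γ))) ^ θ :=
        le_rpow_mul_rpow_of_le_of_le (setIntegral_kinetic_nonneg hs) hsmall hdecay hθ.1 hθ.2
    _ = _ := by
        rw [abs_of_pos hts, mul_rpow (by positivity) (by positivity),
          mul_rpow hC₂.le (by positivity), ← rpow_mul hts.le, ← rpow_mul (by positivity)]
        ring_nf
end

section
/- Let β₁, β₂ ∈ [0,d), γ₂ ≥ 0 with 3β₁ + β₂ + γ₂ > 4d, and write ζ = (ξ,η) ∈ R^{2d}, |ζ|_a = |ξ|^{1/3} + |η|. Then sup_{ζ' ∈ R^{2d}} ∫_{R^{2d}} |ξ|^{−β₁} |η|^{−β₂} (1 + |ζ + ζ'|_a)^{−γ₂} dζ < ∞. -/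
/-!
Since `|ξ|^{1/3} + |η|` dominates both of its summands, the weight `(1 + |ξ|^{1/3} + |η|)^{-γ₂}`
is at most `(1 + |ξ|)^{-γ₁} (1 + |η|)^{-γ₂'}` whenever `3γ₁ + γ₂' = γ₂`, and the hypothesis
`3β₁ + β₂ + γ₂ > 4d` is exactly what allows `β₁ + γ₁ > d` and `β₂ + γ₂' > d` at the same time.
The double integral then factors into two integrals `∫ |x|^{-β} (1 + |x + v|)^{-γ} dx` on `ℝ^d`.
Comparing `|x|` with `|x + v|` bounds such an integral by twice its value at `v = 0`, which is
finite: the singularity at the origin is integrable since `β < d`, and at infinity the integrand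
decays like `|x|^{-(β + γ)}`.
-/

open MeasureTheory Metric

section Kernel

variable {E : Type*} [NormedAddCommGroup E]

lemma norm_rpow_neg_mul_one_add_norm_rpow_neg_le_of_one_le {β : ℝ} (γ : ℝ) (hβ : 0 ≤ β) {x : E}
    (hx : 1 ≤ ‖x‖) :
    ‖x‖ ^ (-β) * (1 + ‖x‖) ^ (-γ) ≤ 2 ^ β * (1 + ‖x‖) ^ (-(β + γ)) := by
  have hpos : 0 < 1 + ‖x‖ := by positivity
  have hhalf : ‖x‖ ^ (-β) ≤ 2 ^ β * (1 + ‖x‖) ^ (-β) := calc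
    ‖x‖ ^ (-β) = 2 ^ β * (2 * ‖x‖) ^ (-β) := by
      rw [Real.mul_rpow zero_le_two (norm_nonneg x), ← mul_assoc,
        ← Real.rpow_add zero_lt_two, add_neg_cancel, Real.rpow_zero, one_mul]
    _ ≤ 2 ^ β * (1 + ‖x‖) ^ (-β) := by
      have := Real.rpow_le_rpow_of_nonpos hpos (by linarith : 1 + ‖x‖ ≤ 2 * ‖x‖) (neg_nonpos.2 hβ)
      gcongr
  calc ‖x‖ ^ (-β) * (1 + ‖x‖) ^ (-γ) ≤ 2 ^ β * (1 + ‖x‖) ^ (-β) * (1 + ‖x‖) ^ (-γ) := by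
        gcongr
    _ = 2 ^ β * (1 + ‖x‖) ^ (-(β + γ)) := by
        rw [mul_assoc, ← Real.rpow_add hpos, neg_add]

lemma norm_rpow_neg_mul_one_add_norm_add_rpow_neg_le {β γ : ℝ} (hβ : 0 ≤ β) (hγ : 0 ≤ γ)
    {x v : E} (hxv : x + v ≠ 0) :
    ‖x‖ ^ (-β) * (1 + ‖x + v‖) ^ (-γ) ≤
      ‖x‖ ^ (-β) * (1 + ‖x‖) ^ (-γ) + ‖x + v‖ ^ (-β) * (1 + ‖x + v‖) ^ (-γ) := by
  rcases le_total ‖x‖ ‖x + v‖ with hle | hle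
  · refine le_add_of_le_of_nonneg ?_ (by positivity)
    gcongr ‖x‖ ^ (-β) * ?_
    exact Real.rpow_le_rpow_of_nonpos (by positivity) (by linarith) (neg_nonpos.2 hγ)
  · refine le_add_of_nonneg_of_le (by positivity) ?_
    gcongr ?_ * _
    exact Real.rpow_le_rpow_of_nonpos (norm_pos_iff.2 hxv) hle (neg_nonpos.2 hβ)

end Kernel

section Integrability

variable {E : Type*} [NormedAddCommGroup E] [NormedSpace ℝ E] [FiniteDimensional ℝ E]
  [MeasurableSpace E] [BorelSpace E] {μ : Measure E} [μ.IsAddHaarMeasure]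

lemma integrable_norm_rpow_neg_mul_one_add_norm_rpow_neg {β γ : ℝ} (hβ₀ : 0 ≤ β)
    (hβ : β < Module.finrank ℝ E) (hβγ : Module.finrank ℝ E < β + γ) :
    Integrable (fun x : E ↦ ‖x‖ ^ (-β) * (1 + ‖x‖) ^ (-γ)) μ := by
  have hγ : 0 ≤ γ := by linarith
  have hmeas : AEStronglyMeasurable (fun x : E ↦ ‖x‖ ^ (-β) * (1 + ‖x‖) ^ (-γ)) μ := by
    fun_prop
  rw [← integrableOn_univ, ← Set.union_compl_self (ball (0 : E) 1), integrableOn_union]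
  constructor
  · refine integrableOn_ball_of_norm_le_rpow (C := 1) ?_ hβ
      (Filter.Eventually.of_forall fun x ↦ ?_) hmeas
    · exact_mod_cast (hβ₀.trans_lt hβ)
    · rw [Real.norm_of_nonneg (by positivity), one_mul]
      exact mul_le_of_le_one_right (by positivity)
        (Real.rpow_le_one_of_one_le_of_nonpos (by simp) (neg_nonpos.2 hγ))
  · refine (((integrable_one_add_norm hβγ).const_mul (2 ^ β)).integrableOn).mono' hmeas.restrict
      ((ae_restrict_iff' measurableSet_ball.compl).2 (Filter.Eventually.of_forall fun x hx ↦ ?_))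
    rw [Real.norm_of_nonneg (by positivity)]
    exact norm_rpow_neg_mul_one_add_norm_rpow_neg_le_of_one_le γ hβ₀ (by simpa using hx)

variable [Nontrivial E]

lemma ae_norm_rpow_neg_mul_one_add_norm_add_rpow_neg_le {β γ : ℝ} (hβ : 0 ≤ β) (hγ : 0 ≤ γ)
    (v : E) :
    ∀ᵐ x ∂μ, ‖x‖ ^ (-β) * (1 + ‖x + v‖) ^ (-γ) ≤
      ‖x‖ ^ (-β) * (1 + ‖x‖) ^ (-γ) + ‖x + v‖ ^ (-β) * (1 + ‖x + v‖) ^ (-γ) := by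
  filter_upwards [Measure.ae_ne μ (-v)] with x hx
  exact norm_rpow_neg_mul_one_add_norm_add_rpow_neg_le hβ hγ
    (by rwa [ne_eq, ← eq_neg_iff_add_eq_zero])

lemma integrable_norm_rpow_neg_mul_one_add_norm_add_rpow_neg {β γ : ℝ} (hβ₀ : 0 ≤ β)
    (hβ : β < Module.finrank ℝ E) (hβγ : Module.finrank ℝ E < β + γ) (v : E) :
    Integrable (fun x : E ↦ ‖x‖ ^ (-β) * (1 + ‖x + v‖) ^ (-γ)) μ := by
  have hint := integrable_norm_rpow_neg_mul_one_add_norm_rpow_neg (μ := μ) hβ₀ hβ hβγ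
  refine (hint.add (hint.comp_add_right v)).mono' (by fun_prop) ?_
  filter_upwards [ae_norm_rpow_neg_mul_one_add_norm_add_rpow_neg_le (μ := μ) hβ₀
    (by linarith) v] with x hx
  rwa [Real.norm_of_nonneg (by positivity)]

lemma integral_norm_rpow_neg_mul_one_add_norm_add_rpow_neg_le {β γ : ℝ} (hβ₀ : 0 ≤ β)
    (hβ : β < Module.finrank ℝ E) (hβγ : Module.finrank ℝ E < β + γ) (v : E) :
    ∫ x, ‖x‖ ^ (-β) * (1 + ‖x + v‖) ^ (-γ) ∂μ ≤
      2 * ∫ x, ‖x‖ ^ (-β) * (1 + ‖x‖) ^ (-γ) ∂μ := by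
  have hint := integrable_norm_rpow_neg_mul_one_add_norm_rpow_neg (μ := μ) hβ₀ hβ hβγ
  calc ∫ x, ‖x‖ ^ (-β) * (1 + ‖x + v‖) ^ (-γ) ∂μ
      ≤ ∫ x, (‖x‖ ^ (-β) * (1 + ‖x‖) ^ (-γ) + ‖x + v‖ ^ (-β) * (1 + ‖x + v‖) ^ (-γ)) ∂μ :=
        integral_mono_of_nonneg (Filter.Eventually.of_forall fun x ↦ by positivity)
          (hint.add (hint.comp_add_right v))
          (ae_norm_rpow_neg_mul_one_add_norm_add_rpow_neg_le hβ₀ (by linarith) v)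
    _ = 2 * ∫ x, ‖x‖ ^ (-β) * (1 + ‖x‖) ^ (-γ) ∂μ := by
        rw [integral_add hint (hint.comp_add_right v),
          integral_add_right_eq_self (fun x ↦ ‖x‖ ^ (-β) * (1 + ‖x‖) ^ (-γ)) v, two_mul]

end Integrability

lemma integral_integral_le_mul_of_le_mul {α α' : Type*} [MeasurableSpace α]
    [MeasurableSpace α'] {μ : Measure α} {ν : Measure α'} {f : α → α' → ℝ} {g : α → ℝ}
    {h : α' → ℝ} (hf : ∀ x y, 0 ≤ f x y) (hg : Integrable g μ) (hh : Integrable h ν)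
    (hfgh : ∀ x y, f x y ≤ g x * h y) :
    ∫ x, ∫ y, f x y ∂ν ∂μ ≤ (∫ x, g x ∂μ) * ∫ y, h y ∂ν := by
  have inner : ∀ x, ∫ y, f x y ∂ν ≤ g x * ∫ y, h y ∂ν := fun x ↦ by
    rw [← integral_const_mul]
    exact integral_mono_of_nonneg (Filter.Eventually.of_forall (hf x)) (hh.const_mul _)
      (Filter.Eventually.of_forall (hfgh x))
  rw [← integral_mul_const]
  exact integral_mono_of_nonneg (Filter.Eventually.of_forall fun x ↦ integral_nonneg (hf x))
    (hg.mul_const _) (Filter.Eventually.of_forall inner)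

lemma one_add_add_rpow_neg_le_mul {a b γ₁ γ₂ : ℝ} (ha : 0 ≤ a) (hb : 0 ≤ b) (hγ₁ : 0 ≤ γ₁)
    (hγ₂ : 0 ≤ γ₂) :
    (1 + (a + b)) ^ (-(γ₁ + γ₂)) ≤ (1 + a) ^ (-γ₁) * (1 + b) ^ (-γ₂) := by
  rw [neg_add, Real.rpow_add (by positivity)]
  exact mul_le_mul
    (Real.rpow_le_rpow_of_nonpos (by positivity) (by linarith) (neg_nonpos.2 hγ₁))
    (Real.rpow_le_rpow_of_nonpos (by positivity) (by linarith) (neg_nonpos.2 hγ₂))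
    (by positivity) (by positivity)

lemma one_add_rpow_rpow_neg_le {t p γ : ℝ} (ht : 0 ≤ t) (hp₀ : 0 ≤ p) (hp₁ : p ≤ 1)
    (hγ : 0 ≤ γ) :
    (1 + t ^ p) ^ (-γ) ≤ (1 + t) ^ (-(p * γ)) := by
  have hsub : (1 + t) ^ p ≤ 1 + t ^ p := by
    simpa using Real.rpow_add_le_add_rpow zero_le_one ht hp₀ hp₁
  rw [neg_mul_eq_mul_neg, Real.rpow_mul (by positivity)]
  exact Real.rpow_le_rpow_of_nonpos (by positivity) hsub (neg_nonpos.2 hγ)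

lemma one_add_rpow_add_rpow_neg_le_mul {a b p γ₁ γ₂ : ℝ} (ha : 0 ≤ a) (hb : 0 ≤ b) (hp₀ : 0 < p)
    (hp₁ : p ≤ 1) (hγ₁ : 0 ≤ γ₁) (hγ₂ : 0 ≤ γ₂) :
    (1 + (a ^ p + b)) ^ (-(γ₁ / p + γ₂)) ≤ (1 + a) ^ (-γ₁) * (1 + b) ^ (-γ₂) := calc
  _ ≤ (1 + a ^ p) ^ (-(γ₁ / p)) * (1 + b) ^ (-γ₂) :=
    one_add_add_rpow_neg_le_mul (by positivity) hb (by positivity) hγ₂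
  _ ≤ (1 + a) ^ (-γ₁) * (1 + b) ^ (-γ₂) := by
    have := one_add_rpow_rpow_neg_le ha hp₀.le hp₁ (div_nonneg hγ₁ hp₀.le)
    rw [mul_div_cancel₀ _ hp₀.ne'] at this
    gcongr

theorem anisotropic_singular_kernel_bound_general (d : ℕ) (β₁ β₂ γ₂ : ℝ)
    (hβ₁ : β₁ ∈ Set.Ico (0 : ℝ) (d : ℝ)) (hβ₂ : β₂ ∈ Set.Ico (0 : ℝ) (d : ℝ))
    (h : 4 * (d : ℝ) < 3 * β₁ + β₂ + γ₂) :
    ∃ C : ℝ, ∀ ξ' η' : EuclideanSpace ℝ (Fin d),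
      (∫ ξ : EuclideanSpace ℝ (Fin d), ∫ η : EuclideanSpace ℝ (Fin d),
        ‖ξ‖ ^ (-β₁) * ‖η‖ ^ (-β₂) *
          (1 + (‖ξ + ξ'‖ ^ ((1 : ℝ) / 3) + ‖η + η'‖)) ^ (-γ₂)) ≤ C := by
  obtain ⟨hβ₁₀, hβ₁d⟩ := hβ₁
  obtain ⟨hβ₂₀, hβ₂d⟩ := hβ₂
  have hdim : (Module.finrank ℝ (EuclideanSpace ℝ (Fin d)) : ℝ) = d := by simp
  rw [← hdim] at hβ₁d hβ₂d
  have : Nontrivial (EuclideanSpace ℝ (Fin d)) :=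
    Module.nontrivial_of_finrank_pos (R := ℝ) (by exact_mod_cast hβ₁₀.trans_lt hβ₁d)
  -- `γ₂ = 3γ₁ + γ₂'`, the excess `4s` in `h` being shared equally by the two conditions `hξ`, `hη`
  set s := (3 * β₁ + β₂ + γ₂ - 4 * d) / 4
  set γ₁ := d - β₁ + s
  set γ₂' := d - β₂ + s
  have hγ : γ₂ = γ₁ / (1 / 3) + γ₂' := by ring
  have hξ : (Module.finrank ℝ (EuclideanSpace ℝ (Fin d)) : ℝ) < β₁ + γ₁ := by linarith
  have hη : (Module.finrank ℝ (EuclideanSpace ℝ (Fin d)) : ℝ) < β₂ + γ₂' := by linarith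
  refine ⟨(2 * ∫ ξ : EuclideanSpace ℝ (Fin d), ‖ξ‖ ^ (-β₁) * (1 + ‖ξ‖) ^ (-γ₁)) *
    (2 * ∫ η : EuclideanSpace ℝ (Fin d), ‖η‖ ^ (-β₂) * (1 + ‖η‖) ^ (-γ₂')), fun ξ' η' ↦ ?_⟩
  calc _ ≤ (∫ ξ, ‖ξ‖ ^ (-β₁) * (1 + ‖ξ + ξ'‖) ^ (-γ₁)) *
        ∫ η, ‖η‖ ^ (-β₂) * (1 + ‖η + η'‖) ^ (-γ₂') := by
        refine integral_integral_le_mul_of_le_mul (fun _ _ ↦ by positivity)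
          (integrable_norm_rpow_neg_mul_one_add_norm_add_rpow_neg hβ₁₀ hβ₁d hξ ξ')
          (integrable_norm_rpow_neg_mul_one_add_norm_add_rpow_neg hβ₂₀ hβ₂d hη η')
          fun ξ η ↦ ?_
        rw [hγ, mul_mul_mul_comm]
        gcongr
        exact one_add_rpow_add_rpow_neg_le_mul (norm_nonneg _) (norm_nonneg _) (by norm_num)
          (by norm_num) (by linarith) (by linarith)
    _ ≤ _ := by
        gcongr
        · exact integral_norm_rpow_neg_mul_one_add_norm_add_rpow_neg_le hβ₁₀ hβ₁d hξ ξ'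
        · exact integral_norm_rpow_neg_mul_one_add_norm_add_rpow_neg_le hβ₂₀ hβ₂d hη η'

/-- Anisotropic singular-kernel bound: for `β₁, β₂ ∈ [0,d)`, `γ₂ ≥ 0` with
`3β₁ + β₂ + γ₂ > 4d`, writing `|ζ|_a = |ξ|^{1/3} + |η|` for `ζ = (ξ,η)`,
`sup_{ζ'} ∫ |ξ|^{−β₁}|η|^{−β₂}(1+|ζ+ζ'|_a)^{−γ₂} dζ < ∞`. -/
theorem anisotropic_singular_kernel_bound (d : ℕ) (hd : 0 < d) (β₁ β₂ γ₂ : ℝ)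
    (hβ₁ : β₁ ∈ Set.Ico (0 : ℝ) (d : ℝ)) (hβ₂ : β₂ ∈ Set.Ico (0 : ℝ) (d : ℝ))
    (hγ₂ : 0 ≤ γ₂) (h : 4 * (d : ℝ) < 3 * β₁ + β₂ + γ₂) :
    ∃ C : ℝ, ∀ ξ' η' : EuclideanSpace ℝ (Fin d),
      (∫ ξ : EuclideanSpace ℝ (Fin d), ∫ η : EuclideanSpace ℝ (Fin d),
        ‖ξ‖ ^ (-β₁) * ‖η‖ ^ (-β₂) *
          (1 + (‖ξ + ξ'‖ ^ ((1 : ℝ) / 3) + ‖η + η'‖)) ^ (-γ₂)) ≤ C :=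
  anisotropic_singular_kernel_bound_general d β₁ β₂ γ₂ hβ₁ hβ₂ h
end

section
/- Let χ : R^{2d} → [0,1] be smooth with χ = 1 on {|z|_a ≤ 1/8} and χ = 0 on {|z|_a > 1/4}, and for z₀ ∈ R^{2d}, 0 < r < 1, set φ_r^{z₀}(z) := χ((z − z₀)/(r(1+|z₀|_a))^a) (anisotropic rescaling). Then for |t| ≤ r³ < 1 one has φ_r^{z₀} · Γ_t φ_{8r}^{z₀} = φ_r^{z₀}, where Γ_t f(z) = f(x + t v, v). -/
/-- The anisotropic distance `|z|_a = |x|^{1/3} + |v|` on `ℝ^{2d}` for `a = (3,1)`. -/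
noncomputable def normA (d : ℕ)
    (z : EuclideanSpace ℝ (Fin d) × EuclideanSpace ℝ (Fin d)) : ℝ :=
  ‖z.1‖ ^ ((1 : ℝ) / 3) + ‖z.2‖

/-- The anisotropically rescaled cutoff
`φ_r^{z₀}(z) = χ((z − z₀)/(r(1+|z₀|_a))^a)`, i.e. the first component is divided by
`(r(1+|z₀|_a))³` and the second by `r(1+|z₀|_a)`. -/
noncomputable def kcut (d : ℕ)
    (χ : EuclideanSpace ℝ (Fin d) × EuclideanSpace ℝ (Fin d) → ℝ) (r : ℝ)
    (z₀ z : EuclideanSpace ℝ (Fin d) × EuclideanSpace ℝ (Fin d)) : ℝ :=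
  χ (((r * (1 + normA d z₀))⁻¹ ^ 3) • (z.1 - z₀.1),
    (r * (1 + normA d z₀))⁻¹ • (z.2 - z₀.2))

private lemma pow_third_cube {x : ℝ} (hx : 0 ≤ x) : (x ^ 3) ^ ((1 : ℝ)/3) = x := by
  rw [← Real.rpow_natCast x 3, ← Real.rpow_mul hx]
  norm_num

private lemma cube_pow_third {x : ℝ} (hx : 0 ≤ x) : (x ^ ((1 : ℝ)/3)) ^ 3 = x := by
  rw [← Real.rpow_natCast (x ^ ((1:ℝ)/3)) 3, ← Real.rpow_mul hx]
  norm_num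

private lemma third_subadd {a b : ℝ} (ha : 0 ≤ a) (hb : 0 ≤ b) :
    (a + b) ^ ((1 : ℝ)/3) ≤ a ^ ((1 : ℝ)/3) + b ^ ((1 : ℝ)/3) := by
  set A := a ^ ((1:ℝ)/3) with hA
  set B := b ^ ((1:ℝ)/3) with hB
  have hA0 : 0 ≤ A := Real.rpow_nonneg ha _
  have hB0 : 0 ≤ B := Real.rpow_nonneg hb _
  have hAB : a + b ≤ (A + B) ^ 3 := by
    have h1 : A ^ 3 = a := cube_pow_third ha
    have h2 : B ^ 3 = b := cube_pow_third hb
    nlinarith [mul_nonneg hA0 hB0, mul_nonneg (mul_nonneg hA0 hA0) hB0,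
      mul_nonneg (mul_nonneg hB0 hB0) hA0]
  calc (a + b) ^ ((1:ℝ)/3) ≤ ((A + B) ^ 3) ^ ((1:ℝ)/3) :=
        Real.rpow_le_rpow (by linarith) hAB (by norm_num)
    _ = A + B := pow_third_cube (by linarith)

private lemma young_third {a : ℝ} (ha : 0 ≤ a) : a ^ ((1 : ℝ)/3) ≤ 2/3 + a/3 := by
  have hb0 : 0 ≤ a ^ ((1:ℝ)/3) := Real.rpow_nonneg ha _
  have h3 : (a ^ ((1:ℝ)/3)) ^ 3 = a := cube_pow_third ha
  nlinarith [sq_nonneg (a ^ ((1:ℝ)/3) - 1)]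

private lemma normA_scale (d : ℕ) {c : ℝ} (hc : 0 < c)
    (p q : EuclideanSpace ℝ (Fin d)) :
    normA d ((c⁻¹ ^ 3) • p, c⁻¹ • q) = c⁻¹ * (‖p‖ ^ ((1 : ℝ)/3) + ‖q‖) := by
  have hci : 0 ≤ c⁻¹ := (inv_nonneg).2 hc.le
  simp only [normA, norm_smul, Real.norm_eq_abs, abs_pow, abs_of_nonneg hci]
  rw [Real.mul_rpow (pow_nonneg hci 3) (norm_nonneg p), pow_third_cube hci]
  ring

/-- Cutoff identity along the kinetic transport flow: for `|t| ≤ r³ < 1`,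
`φ_r^{z₀} · Γ_t φ_{8r}^{z₀} = φ_r^{z₀}` where `Γ_t f(x,v) = f(x + tv, v)`. -/
theorem cutoff_transport_identity (d : ℕ)
    (χ : EuclideanSpace ℝ (Fin d) × EuclideanSpace ℝ (Fin d) → ℝ)
    (hχsmooth : ContDiff ℝ (⊤ : ℕ∞) χ)
    (hχrange : ∀ z, χ z ∈ Set.Icc (0 : ℝ) 1)
    (hχ1 : ∀ z, normA d z ≤ 1 / 8 → χ z = 1)
    (hχ0 : ∀ z, 1 / 4 < normA d z → χ z = 0)
    (r : ℝ) (hr : 0 < r) (hr1 : r < 1)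
    (z₀ : EuclideanSpace ℝ (Fin d) × EuclideanSpace ℝ (Fin d))
    (t : ℝ) (ht : |t| ≤ r ^ 3) :
    ∀ z : EuclideanSpace ℝ (Fin d) × EuclideanSpace ℝ (Fin d),
      kcut d χ r z₀ z * kcut d χ (8 * r) z₀ (z.1 + t • z.2, z.2) =
        kcut d χ r z₀ z := by
  intro z
  by_cases h0 : kcut d χ r z₀ z = 0
  · rw [h0, zero_mul]
  · -- notation
    set N := normA d z₀ with hN
    have hN0 : 0 ≤ N := by
      have := Real.rpow_nonneg (norm_nonneg z₀.1) ((1:ℝ)/3)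
      have := norm_nonneg z₀.2
      simp only [hN, normA]; linarith
    set R := r * (1 + N) with hR
    have hRpos : 0 < R := by positivity
    set X := ‖z.1 - z₀.1‖ ^ ((1:ℝ)/3) with hX
    set V := ‖z.2 - z₀.2‖ with hV
    have hX0 : 0 ≤ X := Real.rpow_nonneg (norm_nonneg _) _
    have hV0 : 0 ≤ V := norm_nonneg _
    -- from kcut r z ≠ 0 : X + V ≤ R/4
    have hsmall : X + V ≤ R / 4 := by
      by_contra hc
      apply h0
      unfold kcut
      apply hχ0
      rw [normA_scale d hRpos]
      show (1:ℝ)/4 < R⁻¹ * (X + V)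
      have hXV : R / 4 < X + V := not_le.mp hc
      calc (1:ℝ)/4 = R⁻¹ * (R/4) := by field_simp
        _ < R⁻¹ * (X + V) := mul_lt_mul_of_pos_left hXV (inv_pos.2 hRpos)
    -- the second factor equals 1
    have hfac : kcut d χ (8 * r) z₀ (z.1 + t • z.2, z.2) = 1 := by
      unfold kcut
      apply hχ1
      have h8 : (8 * r) * (1 + N) = 8 * R := by rw [hR]; ring
      simp only [← hN, h8]
      rw [show (z.1 + t • z.2) - z₀.1 = (z.1 - z₀.1) + t • z.2 by abel]
      rw [normA_scale d (by positivity : (0:ℝ) < 8 * R)]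
      -- estimate ‖(z.1 - z₀.1) + t • z.2‖^{1/3} + V ≤ R
      have hv : ‖z.2‖ ≤ V + N := by
        have h1 : ‖z.2‖ ≤ ‖z.2 - z₀.2‖ + ‖z₀.2‖ := by
          simpa using norm_add_le (z.2 - z₀.2) z₀.2
        have h2 : ‖z₀.2‖ ≤ N := by
          have := Real.rpow_nonneg (norm_nonneg z₀.1) ((1:ℝ)/3)
          simp only [hN, normA]; linarith
        linarith
      have hnorm : ‖(z.1 - z₀.1) + t • z.2‖ ≤ ‖z.1 - z₀.1‖ + |t| * ‖z.2‖ := by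
        have := norm_add_le (z.1 - z₀.1) (t • z.2)
        simpa [norm_smul, Real.norm_eq_abs] using this
      have hX' : ‖(z.1 - z₀.1) + t • z.2‖ ^ ((1:ℝ)/3) ≤ X + (|t| * ‖z.2‖) ^ ((1:ℝ)/3) := by
        calc ‖(z.1 - z₀.1) + t • z.2‖ ^ ((1:ℝ)/3)
            ≤ (‖z.1 - z₀.1‖ + |t| * ‖z.2‖) ^ ((1:ℝ)/3) :=
              Real.rpow_le_rpow (norm_nonneg _) hnorm (by norm_num)
          _ ≤ X + (|t| * ‖z.2‖) ^ ((1:ℝ)/3) :=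
              third_subadd (norm_nonneg _) (by positivity)
      have htv : (|t| * ‖z.2‖) ^ ((1:ℝ)/3) ≤ r * (2/3 + ‖z.2‖/3) := by
        calc (|t| * ‖z.2‖) ^ ((1:ℝ)/3)
            = |t| ^ ((1:ℝ)/3) * ‖z.2‖ ^ ((1:ℝ)/3) :=
              Real.mul_rpow (abs_nonneg t) (norm_nonneg _)
          _ ≤ r * (2/3 + ‖z.2‖/3) := by
              have h1 : |t| ^ ((1:ℝ)/3) ≤ r := by
                calc |t| ^ ((1:ℝ)/3) ≤ (r ^ 3) ^ ((1:ℝ)/3) :=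
                      Real.rpow_le_rpow (abs_nonneg t) ht (by norm_num)
                  _ = r := pow_third_cube hr.le
              have h2 : ‖z.2‖ ^ ((1:ℝ)/3) ≤ 2/3 + ‖z.2‖/3 := young_third (norm_nonneg _)
              have h3 : 0 ≤ ‖z.2‖ ^ ((1:ℝ)/3) := Real.rpow_nonneg (norm_nonneg _) _
              calc |t| ^ ((1:ℝ)/3) * ‖z.2‖ ^ ((1:ℝ)/3)
                  ≤ r * ‖z.2‖ ^ ((1:ℝ)/3) := mul_le_mul_of_nonneg_right h1 h3
                _ ≤ r * (2/3 + ‖z.2‖/3) := mul_le_mul_of_nonneg_left h2 hr.le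
      have hkey : ‖(z.1 - z₀.1) + t • z.2‖ ^ ((1:ℝ)/3) + V ≤ R := by
        have hz2 : 0 ≤ ‖z.2‖ := norm_nonneg _
        nlinarith [mul_le_mul_of_nonneg_left hv (by linarith : (0:ℝ) ≤ r/3),
          mul_le_mul_of_nonneg_left hsmall hr.le]
      have : (8 * R)⁻¹ * (‖(z.1 - z₀.1) + t • z.2‖ ^ ((1:ℝ)/3) + V) ≤ (8 * R)⁻¹ * R := by
        apply mul_le_mul_of_nonneg_left hkey (by positivity)
      calc (8 * R)⁻¹ * (‖(z.1 - z₀.1) + t • z.2‖ ^ ((1:ℝ)/3) + V) ≤ (8 * R)⁻¹ * R := this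
        _ = 1/8 := by field_simp
    rw [hfac, mul_one]
end

section
/- For |t| ≤ r³ < 1 and the cutoffs φ_r^{z₀} as above, for j = 0, 1 there is a constant C = C(r,d) > 0 such that ||Γ_t ∇_v^j φ_r^{z₀} − ∇_v^j φ_r^{z₀}||_{L^∞} ≤ C |t| / (1 + |z₀|_a^{2+j}). -/
lemma normA_nonneg (d : ℕ) (z : EuclideanSpace ℝ (Fin d) × EuclideanSpace ℝ (Fin d)) :
    0 ≤ normA d z :=
  add_nonneg (Real.rpow_nonneg (norm_nonneg _) _) (norm_nonneg _)

lemma snd_le_normA (d : ℕ) (z : EuclideanSpace ℝ (Fin d) × EuclideanSpace ℝ (Fin d)) :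
    ‖z.2‖ ≤ normA d z :=
  le_add_of_nonneg_left (Real.rpow_nonneg (norm_nonneg _) _)

set_option maxHeartbeats 1000000 in
/-- Transport-commutator estimates for the cutoffs: for `|t| ≤ r³ < 1` and `j = 0, 1`,
`‖Γ_t ∇_v^j φ_r^{z₀} − ∇_v^j φ_r^{z₀}‖_∞ ≤ C |t| / (1 + |z₀|_a^{2+j})`, where
`Γ_t f(x,v) = f(x+tv, v)` and `∇_v` is the derivative in the velocity variable. -/
theorem cutoff_transport_derivative_bound (d : ℕ)
    (χ : EuclideanSpace ℝ (Fin d) × EuclideanSpace ℝ (Fin d) → ℝ)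
    (hχsmooth : ContDiff ℝ (⊤ : ℕ∞) χ)
    (hχrange : ∀ z, χ z ∈ Set.Icc (0 : ℝ) 1)
    (hχ1 : ∀ z, normA d z ≤ 1 / 8 → χ z = 1)
    (hχ0 : ∀ z, 1 / 4 < normA d z → χ z = 0)
    (r : ℝ) (hr : 0 < r) (hr1 : r < 1) :
    ∃ C > 0, ∀ z₀ : EuclideanSpace ℝ (Fin d) × EuclideanSpace ℝ (Fin d),
      ∀ t : ℝ, |t| ≤ r ^ 3 →
        (∀ z : EuclideanSpace ℝ (Fin d) × EuclideanSpace ℝ (Fin d),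
          |kcut d χ r z₀ (z.1 + t • z.2, z.2) - kcut d χ r z₀ z| ≤
            C * |t| / (1 + (normA d z₀) ^ 2)) ∧
        (∀ z : EuclideanSpace ℝ (Fin d) × EuclideanSpace ℝ (Fin d),
          ‖(fderiv ℝ (fun w => kcut d χ r z₀ (z.1 + t • z.2, w)) z.2) -
              (fderiv ℝ (fun w => kcut d χ r z₀ (z.1, w)) z.2)‖ ≤
            C * |t| / (1 + (normA d z₀) ^ 3)) := by
  classical
  -- χ has compact support
  have hsupp : ∀ z, χ z ≠ 0 → normA d z ≤ 1 / 4 := by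
    intro z hz
    by_contra h
    exact hz (hχ0 z (lt_of_not_ge h))
  have hcs : HasCompactSupport χ := by
    apply HasCompactSupport.intro (isCompact_closedBall
      (0 : EuclideanSpace ℝ (Fin d) × EuclideanSpace ℝ (Fin d)) 1)
    intro z hz
    by_contra hzne
    apply hz
    have hle := hsupp z hzne
    have h1 : ‖z.1‖ ^ ((1:ℝ)/3) ≤ 1/4 := by
      have := snd_le_normA d z
      have h2 : (0:ℝ) ≤ ‖z.2‖ := norm_nonneg _
      unfold normA at hle
      linarith
    have h2 : ‖z.2‖ ≤ 1/4 := le_trans (snd_le_normA d z) hle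
    have h1' : ‖z.1‖ ≤ 1 := by
      have h3 := Real.rpow_le_rpow (Real.rpow_nonneg (norm_nonneg _) _) h1 (by norm_num : (0:ℝ) ≤ 3)
      rw [← Real.rpow_mul (norm_nonneg _)] at h3
      have h4 : ((1:ℝ)/4) ^ (3:ℝ) = 1/64 := by
        rw [show (3:ℝ) = ((3:ℕ):ℝ) by norm_num, Real.rpow_natCast]
        norm_num
      rw [h4] at h3
      norm_num at h3
      linarith
    rw [Metric.mem_closedBall, dist_zero_right, Prod.norm_def]
    exact max_le h1' (by linarith)
  -- Lipschitz constants for χ and its derivative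
  obtain ⟨K₁, hK₁⟩ := ContDiff.lipschitzWith_of_hasCompactSupport hcs hχsmooth (by simp)
  have hχ'smooth : ContDiff ℝ (⊤ : ℕ∞) (fderiv ℝ χ) := hχsmooth.fderiv_right (by simp)
  obtain ⟨K₂, hK₂⟩ := ContDiff.lipschitzWith_of_hasCompactSupport (hcs.fderiv ℝ) hχ'smooth (by simp)
  set C : ℝ := 2 * ((K₁ : ℝ) + (K₂ : ℝ) + 1) / r ^ 4 with hC
  have hCpos : 0 < C := by positivity
  refine ⟨C, hCpos, ?_⟩
  intro z₀ t ht
  set N : ℝ := normA d z₀ with hN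
  have hN0 : 0 ≤ N := normA_nonneg d z₀
  set l : ℝ := (r * (1 + N))⁻¹ with hl
  have hl0 : 0 < l := by positivity
  have hv₀ : ‖z₀.2‖ ≤ N := snd_le_normA d z₀
  -- velocity bound on the support
  have hvbound : ∀ v : EuclideanSpace ℝ (Fin d), ‖l • (v - z₀.2)‖ ≤ 1/4 → ‖v‖ ≤ 2 * (1 + N) := by
    intro v hv
    rw [norm_smul, Real.norm_eq_abs, abs_of_pos hl0, hl,
      inv_mul_le_iff₀ (by positivity : (0:ℝ) < r * (1 + N))] at hv
    have hv' : ‖v - z₀.2‖ ≤ r * (1 + N) / 4 := by linarith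
    have h1 : r * (1 + N) ≤ 1 + N := by nlinarith
    calc ‖v‖ ≤ ‖z₀.2‖ + ‖v - z₀.2‖ := by
          have := norm_add_le (z₀.2) (v - z₀.2)
          simpa using this
      _ ≤ N + (1 + N) / 4 := by linarith
      _ ≤ 2 * (1 + N) := by linarith
  have hr4 : r ^ 4 ≤ r ^ 3 := pow_le_pow_of_le_one hr.le hr1.le (by norm_num)
  constructor
  · -- zeroth order bound
    intro z
    set p : EuclideanSpace ℝ (Fin d) := (l ^ 3) • (z.1 + t • z.2 - z₀.1) with hp
    set p' : EuclideanSpace ℝ (Fin d) := (l ^ 3) • (z.1 - z₀.1) with hp'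
    set q : EuclideanSpace ℝ (Fin d) := l • (z.2 - z₀.2) with hq
    have hkc1 : kcut d χ r z₀ (z.1 + t • z.2, z.2) = χ (p, q) := rfl
    have hkc2 : kcut d χ r z₀ z = χ (p', q) := rfl
    rw [hkc1, hkc2]
    by_cases hqs : ‖q‖ ≤ 1/4
    · -- support case
      have hv : ‖z.2‖ ≤ 2 * (1 + N) := hvbound z.2 hqs
      have hpp' : p - p' = (l ^ 3) • (t • z.2) := by
        rw [hp, hp', ← smul_sub]
        congr 1
        abel
      have hdist : |χ (p, q) - χ (p', q)| ≤ (K₁ : ℝ) * (l ^ 3 * (|t| * ‖z.2‖)) := by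
        have h := hK₁.dist_le_mul (p, q) (p', q)
        rw [Prod.dist_eq] at h
        simp only [dist_self] at h
        rw [max_eq_left dist_nonneg, Real.dist_eq, dist_eq_norm, hpp', norm_smul, norm_smul] at h
        simpa [abs_of_pos hl0, mul_assoc] using h
      refine hdist.trans ?_
      calc (K₁ : ℝ) * (l ^ 3 * (|t| * ‖z.2‖))
          ≤ (K₁ : ℝ) * (l ^ 3 * (|t| * (2 * (1 + N)))) := by
            gcongr
        _ = (2 * (K₁ : ℝ) / (r ^ 3 * (1 + N) ^ 2)) * |t| := by
            rw [hl]
            have hrne : r ≠ 0 := ne_of_gt hr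
            have hNne : (1 + N) ≠ 0 := by positivity
            field_simp
        _ ≤ (2 * ((K₁ : ℝ) + (K₂ : ℝ) + 1) / (r ^ 4 * (1 + N ^ 2))) * |t| := by
            apply mul_le_mul_of_nonneg_right _ (abs_nonneg t)
            have h2 : 1 + N ^ 2 ≤ (1 + N) ^ 2 := by nlinarith
            have hdenom : r ^ 4 * (1 + N ^ 2) ≤ r ^ 3 * (1 + N) ^ 2 :=
              mul_le_mul hr4 h2 (by positivity) (by positivity)
            exact div_le_div₀ (by positivity)
              (by linarith [NNReal.coe_nonneg K₂]) (by positivity) hdenom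
        _ = C * |t| / (1 + N ^ 2) := by
            rw [hC]
            have hrne : r ≠ 0 := ne_of_gt hr
            have hNne : (1 + N ^ 2) ≠ 0 := by positivity
            field_simp
    · -- away from the support: both terms vanish
      have h0 : ∀ u : EuclideanSpace ℝ (Fin d), χ (u, q) = 0 := by
        intro u
        apply hχ0
        have : ‖q‖ ≤ normA d (u, q) := snd_le_normA d (u, q)
        linarith [lt_of_not_ge hqs]
      rw [h0 p, h0 p']
      simp only [sub_zero, abs_zero]
      positivity
  · -- first order bound
    intro z
    set p : EuclideanSpace ℝ (Fin d) := (l ^ 3) • (z.1 + t • z.2 - z₀.1) with hp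
    set p' : EuclideanSpace ℝ (Fin d) := (l ^ 3) • (z.1 - z₀.1) with hp'
    set q : EuclideanSpace ℝ (Fin d) := l • (z.2 - z₀.2) with hq
    set L : EuclideanSpace ℝ (Fin d) →L[ℝ]
        EuclideanSpace ℝ (Fin d) × EuclideanSpace ℝ (Fin d) :=
      (0 : EuclideanSpace ℝ (Fin d) →L[ℝ] EuclideanSpace ℝ (Fin d)).prod
        (l • ContinuousLinearMap.id ℝ (EuclideanSpace ℝ (Fin d))) with hL
    have hLnorm : ‖L‖ ≤ l := by
      apply ContinuousLinearMap.opNorm_le_bound _ hl0.le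
      intro u
      rw [hL]
      simp only [ContinuousLinearMap.prod_apply, ContinuousLinearMap.zero_apply,
        ContinuousLinearMap.smul_apply, ContinuousLinearMap.coe_id', id_eq, Prod.norm_def]
      rw [norm_smul, Real.norm_eq_abs, abs_of_pos hl0, norm_zero]
      exact max_le (by positivity) le_rfl
    have hgder : ∀ c : EuclideanSpace ℝ (Fin d),
        HasFDerivAt (fun w : EuclideanSpace ℝ (Fin d) =>
          ((c, l • (w - z₀.2)) :
            EuclideanSpace ℝ (Fin d) × EuclideanSpace ℝ (Fin d))) L z.2 := by
      intro c
      apply HasFDerivAt.prodMk (hasFDerivAt_const c z.2)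
      exact ((hasFDerivAt_id z.2).sub_const z₀.2).const_smul l
    have hfd : ∀ c : EuclideanSpace ℝ (Fin d),
        HasFDerivAt (fun w : EuclideanSpace ℝ (Fin d) => χ (c, l • (w - z₀.2)))
          ((fderiv ℝ χ (c, l • (z.2 - z₀.2))).comp L) z.2 := by
      intro c
      exact ((hχsmooth.differentiable (by simp) _).hasFDerivAt).comp z.2 (hgder c)
    have hfun1 : (fun w => kcut d χ r z₀ (z.1 + t • z.2, w)) =
        fun w : EuclideanSpace ℝ (Fin d) => χ (p, l • (w - z₀.2)) := rfl
    have hfun2 : (fun w => kcut d χ r z₀ (z.1, w)) =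
        fun w : EuclideanSpace ℝ (Fin d) => χ (p', l • (w - z₀.2)) := rfl
    rw [hfun1, hfun2, (hfd p).fderiv, (hfd p').fderiv, ← ContinuousLinearMap.sub_comp]
    by_cases hqs : ‖q‖ ≤ 1/4
    · have hv : ‖z.2‖ ≤ 2 * (1 + N) := hvbound z.2 hqs
      have hpp' : p - p' = (l ^ 3) • (t • z.2) := by
        rw [hp, hp', ← smul_sub]
        congr 1
        abel
      have hdist : ‖fderiv ℝ χ (p, q) - fderiv ℝ χ (p', q)‖ ≤
          (K₂ : ℝ) * (l ^ 3 * (|t| * ‖z.2‖)) := by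
        have h := hK₂.dist_le_mul (p, q) (p', q)
        rw [Prod.dist_eq] at h
        simp only [dist_self] at h
        rw [max_eq_left dist_nonneg, dist_eq_norm, dist_eq_norm, hpp', norm_smul, norm_smul] at h
        simpa [abs_of_pos hl0, mul_assoc] using h
      calc ‖(fderiv ℝ χ (p, q) - fderiv ℝ χ (p', q)).comp L‖
          ≤ ‖fderiv ℝ χ (p, q) - fderiv ℝ χ (p', q)‖ * ‖L‖ :=
            ContinuousLinearMap.opNorm_comp_le _ _
        _ ≤ ((K₂ : ℝ) * (l ^ 3 * (|t| * ‖z.2‖))) * l := by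
            apply mul_le_mul hdist hLnorm (norm_nonneg _) (by positivity)
        _ ≤ ((K₂ : ℝ) * (l ^ 3 * (|t| * (2 * (1 + N))))) * l := by gcongr
        _ = (2 * (K₂ : ℝ) / (r ^ 4 * (1 + N) ^ 3)) * |t| := by
            rw [hl]
            have hrne : r ≠ 0 := ne_of_gt hr
            have hNne : (1 + N) ≠ 0 := by positivity
            field_simp
        _ ≤ (2 * ((K₁ : ℝ) + (K₂ : ℝ) + 1) / (r ^ 4 * (1 + N ^ 3))) * |t| := by
            apply mul_le_mul_of_nonneg_right _ (abs_nonneg t)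
            have h3 : 1 + N ^ 3 ≤ (1 + N) ^ 3 := by nlinarith
            have hdenom : r ^ 4 * (1 + N ^ 3) ≤ r ^ 4 * (1 + N) ^ 3 :=
              mul_le_mul_of_nonneg_left h3 (by positivity)
            exact div_le_div₀ (by positivity)
              (by linarith [NNReal.coe_nonneg K₁]) (by positivity) hdenom
        _ = C * |t| / (1 + N ^ 3) := by
            rw [hC]
            have hrne : r ≠ 0 := ne_of_gt hr
            have hNne : (1 + N ^ 3) ≠ 0 := by positivity
            field_simp
    · -- both derivatives vanish away from the support
      have hU : IsOpen {w : EuclideanSpace ℝ (Fin d) × EuclideanSpace ℝ (Fin d) |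
          1/4 < ‖w.2‖} := isOpen_lt continuous_const (continuous_norm.comp continuous_snd)
      have hder0 : ∀ u : EuclideanSpace ℝ (Fin d), fderiv ℝ χ (u, q) = 0 := by
        intro u
        have hmem : ((u, q) : EuclideanSpace ℝ (Fin d) × EuclideanSpace ℝ (Fin d)) ∈
            {w : EuclideanSpace ℝ (Fin d) × EuclideanSpace ℝ (Fin d) | 1/4 < ‖w.2‖} :=
          lt_of_not_ge hqs
        have hev : χ =ᶠ[nhds ((u, q) :
            EuclideanSpace ℝ (Fin d) × EuclideanSpace ℝ (Fin d))] (fun _ => (0:ℝ)) := by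
          filter_upwards [hU.mem_nhds hmem] with w hw
          apply hχ0
          have : ‖w.2‖ ≤ normA d w := snd_le_normA d w
          exact lt_of_lt_of_le hw this
        rw [hev.fderiv_eq]
        exact fderiv_const_apply _
      rw [hder0 p, hder0 p']
      simp only [sub_self, ContinuousLinearMap.zero_comp, norm_zero]
      positivity
end
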